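/- If f ∈ 𝒮(ℝ) has support in (r,∞) for some r > 0, then the analytic continuation of f̂⁺ to the strip {0 ≤ Im β ≤ π} satisfies |f̂⁺(β+iλ)| ≤ c·e^{−r e^β sin λ} for all real β and λ ∈ [0,π], where c is a constant depending on f. -/

import Mathlib

open MeasureTheory

/-- The analytic continuation `f̂⁺(ζ) = i e^ζ f̃(e^ζ)` to complex `ζ`,
with `f̃(z) = (2π)^{−1/2} ∫ f(ξ) e^{izξ} dξ` the continued Fourier transform. -/
noncomputable def hatPlusC (f : ℝ → ℂ) (ζ : ℂ) : ℂ :=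
  Complex.I * Complex.exp ζ * ((Real.sqrt (2 * Real.pi) : ℂ)⁻¹ *
    ∫ x : ℝ, f x * Complex.exp (Complex.I * Complex.exp ζ * x))

open Complex Set Function

/-! Writing `z = e^ζ`, the factor `z` in front of `f̃(z)` is removed by one integration by parts,
`i z ∫ f(x) e^{izx} dx = -∫ f'(x) e^{izx} dx`. On the support `x ≥ r` of `f'` the kernel satisfies
`|e^{izx}| = e^{-x Im z} ≤ e^{-r Im z}` as soon as `Im z ≥ 0`, and for `ζ = β + iλ` with
`0 ≤ λ ≤ π` one has `Im z = e^β sin λ ≥ 0`. -/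

lemma norm_cexp_I_mul_ofReal (z : ℂ) (x : ℝ) : ‖cexp (I * z * x)‖ = Real.exp (-(z.im * x)) := by
  simp [Complex.norm_exp, Complex.mul_re, Complex.mul_im]

lemma norm_cexp_I_mul_ofReal_le {z : ℂ} (hz : 0 ≤ z.im) {r x : ℝ} (hx : r ≤ x) :
    ‖cexp (I * z * x)‖ ≤ Real.exp (-(r * z.im)) := by
  rw [norm_cexp_I_mul_ofReal, Real.exp_le_exp, neg_le_neg_iff, mul_comm r]
  exact mul_le_mul_of_nonneg_left hx hz

lemma support_deriv_subset_Ici {E : Type*} [NormedAddCommGroup E] [NormedSpace ℝ E]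
    {f : ℝ → E} {r : ℝ} (hf : support f ⊆ Ici r) : support (deriv f) ⊆ Ici r :=
  support_deriv_subset.trans (closure_minimal hf isClosed_Ici)

section SupportedInIci

variable {g : ℝ → ℂ} {r : ℝ} {z : ℂ}

lemma norm_mul_cexp_I_mul_le (hg : support g ⊆ Ici r) (hz : 0 ≤ z.im) (x : ℝ) :
    ‖g x * cexp (I * z * x)‖ ≤ Real.exp (-(r * z.im)) * ‖g x‖ := by
  by_cases hx : g x = 0
  · simp [hx]
  · rw [norm_mul, mul_comm]
    exact mul_le_mul_of_nonneg_right (norm_cexp_I_mul_ofReal_le hz (hg hx)) (norm_nonneg _)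

lemma integrable_mul_cexp_I_mul (hgi : Integrable g) (hg : support g ⊆ Ici r) (hz : 0 ≤ z.im) :
    Integrable fun x : ℝ ↦ g x * cexp (I * z * x) :=
  (hgi.norm.const_mul _).mono'
    (hgi.aestronglyMeasurable.mul
      (by fun_prop : Continuous fun x : ℝ ↦ cexp (I * z * x)).aestronglyMeasurable)
    (.of_forall (norm_mul_cexp_I_mul_le hg hz))

lemma norm_integral_mul_cexp_I_mul_le (hgi : Integrable g) (hg : support g ⊆ Ici r)
    (hz : 0 ≤ z.im) :
    ‖∫ x : ℝ, g x * cexp (I * z * x)‖ ≤ Real.exp (-(r * z.im)) * ∫ x : ℝ, ‖g x‖ := by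
  rw [← integral_const_mul]
  exact norm_integral_le_of_norm_le (hgi.norm.const_mul _) (.of_forall (norm_mul_cexp_I_mul_le hg hz))

end SupportedInIci

lemma I_mul_integral_mul_cexp_I_mul {f : ℝ → ℂ} {r : ℝ} {z : ℂ} (hfd : Differentiable ℝ f)
    (hfi : Integrable f) (hf'i : Integrable (deriv f)) (hf : support f ⊆ Ici r) (hz : 0 ≤ z.im) :
    I * z * ∫ x : ℝ, f x * cexp (I * z * x) = -∫ x : ℝ, deriv f x * cexp (I * z * x) := by
  have hE (x : ℝ) : HasDerivAt (fun y : ℝ ↦ cexp (I * z * y)) (I * z * cexp (I * z * x)) x := by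
    simpa [mul_comm] using (((hasDerivAt_id (x : ℂ)).const_mul (I * z)).cexp).comp_ofReal
  rw [← integral_const_mul]
  convert integral_mul_deriv_eq_deriv_mul_of_integrable (fun x _ ↦ (hfd x).hasDerivAt)
    (fun x _ ↦ hE x) ?_ (integrable_mul_cexp_I_mul hf'i (support_deriv_subset_Ici hf) hz)
    (integrable_mul_cexp_I_mul hfi hf hz) using 2
  · ext x
    ring
  · refine ((integrable_mul_cexp_I_mul hfi hf hz).const_mul (I * z)).congr (.of_forall fun x ↦ ?_)
    simp only [Pi.mul_apply]
    ring

lemma norm_hatPlusC_le {f : ℝ → ℂ} {r : ℝ} {ζ : ℂ} (hfd : Differentiable ℝ f)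
    (hfi : Integrable f) (hf'i : Integrable (deriv f)) (hf : support f ⊆ Ici r)
    (hζ : 0 ≤ (cexp ζ).im) :
    ‖hatPlusC f ζ‖ ≤ (Real.sqrt (2 * Real.pi))⁻¹ * (∫ x : ℝ, ‖deriv f x‖) *
      Real.exp (-(r * (cexp ζ).im)) := by
  rw [hatPlusC, mul_left_comm, I_mul_integral_mul_cexp_I_mul hfd hfi hf'i hf hζ, norm_mul, norm_neg, norm_inv, norm_real,
    Real.norm_of_nonneg (Real.sqrt_nonneg _), mul_assoc, mul_comm (∫ x : ℝ, ‖deriv f x‖)]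
  gcongr
  exact norm_integral_mul_cexp_I_mul_le hf'i (support_deriv_subset_Ici hf) hζ

theorem hatPlus_sharpened_bound_general
    (f : SchwartzMap ℝ ℂ) (r : ℝ)
    (hsupp : Function.support (f : ℝ → ℂ) ⊆ Set.Ioi r) :
    ∃ c : ℝ, ∀ β lam : ℝ, 0 ≤ lam → lam ≤ Real.pi →
      ‖hatPlusC (fun x => f x) (β + lam * Complex.I)‖
        ≤ c * Real.exp (-(r * Real.exp β * Real.sin lam)) := by
  refine ⟨(Real.sqrt (2 * Real.pi))⁻¹ * ∫ x : ℝ, ‖deriv f x‖, fun β lam h0 hπ ↦ ?_⟩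
  have him : (cexp (β + lam * I)).im = Real.exp β * Real.sin lam := by
    simp [Complex.exp_im]
  have hf'i : Integrable (deriv f) := by
    rw [← funext (SchwartzMap.derivCLM_apply ℝ f)]
    exact (SchwartzMap.derivCLM ℝ ℂ f).integrable
  have hζ : 0 ≤ (cexp (β + lam * I)).im :=
    him ▸ mul_nonneg (Real.exp_pos β).le (Real.sin_nonneg_of_nonneg_of_le_pi h0 hπ)
  simpa only [him, mul_assoc] using
    norm_hatPlusC_le f.differentiable f.integrable hf'i (hsupp.trans Ioi_subset_Ici_self) hζ

/-- If Schwartz `f` is supported in `(r,∞)` with `r > 0`, then the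
continuation of `f̂⁺` to the strip `{0 ≤ Im β ≤ π}` satisfies
`|f̂⁺(β+iλ)| ≤ c·e^{−r e^β sin λ}`. -/
theorem hatPlus_sharpened_bound
    (f : SchwartzMap ℝ ℂ) (r : ℝ) (hr : 0 < r)
    (hsupp : Function.support (f : ℝ → ℂ) ⊆ Set.Ioi r) :
    ∃ c : ℝ, ∀ β lam : ℝ, 0 ≤ lam → lam ≤ Real.pi →
      ‖hatPlusC (fun x => f x) (β + lam * Complex.I)‖
        ≤ c * Real.exp (-(r * Real.exp β * Real.sin lam)) :=
  hatPlus_sharpened_bound_general f r hsupp
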